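/- arXiv:2511.15149 — 3 statements merged into one kernel-verified Lean document; each statement's English description precedes it below -/
import Mathlib

section
/- Let n ≥ 1 be a natural number, let z be a complex number with Re(z) > 0, and let u, v be complex numbers with u^n ∈ 𝔻 and v ∈ 𝔻'. Then F(nz; u^n, v) = ∑_{α^n = 1} F(z; uα, v), where the sum runs over all n-th roots of unity α. -/
open Complex MeasureTheory Polynomial

/-- `t^z := exp(z · log t)` with `log t` the real logarithm. -/
noncomputable def tpow (z : ℂ) (t : ℝ) : ℂ := Complex.exp (z * Real.log t)

/-- The Herglotz–Zagier–Novikov function `F(z;u,v) = ∫₀¹ log(1 − u t^z)/(v⁻¹ − t) dt`. -/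
noncomputable def F (z u v : ℂ) : ℂ :=
  ∫ t in (0:ℝ)..1, Complex.log (1 - u * tpow z t) / (v⁻¹ - (t : ℂ))

theorem IsPrimitiveRoot.sum_nthRootsFinset_pow {R : Type*} [CommRing R] [IsDomain R] {ζ : R}
    {n : ℕ} (hζ : IsPrimitiveRoot ζ n) (k : ℕ) :
    ∑ α ∈ nthRootsFinset n (1 : R), α ^ k = if n ∣ k then (n : R) else 0 := by
  classical
  have hsum : ∑ α ∈ nthRootsFinset n (1 : R), α ^ k = ∑ i ∈ Finset.range n, (ζ ^ k) ^ i := by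
    rw [nthRootsFinset_def, ← Multiset.toFinset_eq (nthRoots_one_nodup hζ), Finset.sum_mk,
      hζ.nthRoots_eq (one_pow n)]
    simp [← pow_mul, mul_comm, Finset.sum_eq_multiset_sum]
  rw [hsum]
  split_ifs with hdvd
  · simp [(hζ.pow_eq_one_iff_dvd k).mpr hdvd]
  · have hζk : ζ ^ k - 1 ≠ 0 := sub_ne_zero.mpr fun h => hdvd ((hζ.pow_eq_one_iff_dvd k).mp h)
    refine (mul_eq_zero.mp ?_).resolve_right hζk
    rw [geom_sum_mul, ← pow_mul, mul_comm, pow_mul, hζ.pow_eq_one, one_pow, sub_self]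

theorem norm_eq_one_of_mem_nthRootsFinset {n : ℕ} {α : ℂ} (hα : α ∈ nthRootsFinset n (1 : ℂ)) :
    ‖α‖ = 1 := by
  rcases n.eq_zero_or_pos with rfl | hn
  · simp at hα
  · exact Complex.norm_eq_one_of_pow_eq_one ((mem_nthRootsFinset hn 1).mp hα) hn.ne'

theorem sum_log_one_sub_mul_nthRoot {n : ℕ} (hn : 0 < n) {x : ℂ} (hx : ‖x‖ < 1) :
    ∑ α ∈ nthRootsFinset n (1 : ℂ), log (1 - α * x) = log (1 - x ^ n) := by
  set f : ℕ → ℂ := fun k => if n ∣ k then n * x ^ k / k else 0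
  have hsum_roots : HasSum f (∑ α ∈ nthRootsFinset n (1 : ℂ), -log (1 - α * x)) := by
    have hζ := Complex.isPrimitiveRoot_exp n hn.ne'
    have hterm : ∀ α ∈ nthRootsFinset n (1 : ℂ),
        HasSum (fun k : ℕ => (α * x) ^ k / k) (-log (1 - α * x)) := fun α hα =>
      hasSum_taylorSeries_neg_log (by rwa [norm_mul, norm_eq_one_of_mem_nthRootsFinset hα, one_mul])
    convert hasSum_sum hterm using 1
    funext k
    simp_rw [mul_pow, mul_div_assoc, ← Finset.sum_mul, hζ.sum_nthRootsFinset_pow, f]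
    split_ifs <;> ring
  have hsum_pow : HasSum f (-log (1 - x ^ n)) := by
    have hinj : Function.Injective (n * ·) := mul_right_injective₀ hn.ne'
    refine (hinj.hasSum_iff fun k hk => if_neg ?_).mp ?_
    · rintro ⟨m, rfl⟩
      exact hk ⟨m, rfl⟩
    · convert hasSum_taylorSeries_neg_log (z := x ^ n)
        (by simpa using pow_lt_one₀ (norm_nonneg x) hx hn.ne') with m
      simp only [Function.comp_apply, dvd_mul_right, if_true, Nat.cast_mul, pow_mul]
      exact mul_div_mul_left _ _ (Nat.cast_ne_zero.mpr hn.ne')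
  rw [← neg_inj, ← Finset.sum_neg_distrib]
  exact hsum_roots.unique hsum_pow

theorem norm_log_one_sub_le {x : ℂ} (hx : ‖x‖ < 1) :
    ‖log (1 - x)‖ ≤ -Real.log (1 - ‖x‖) := by
  have hreal : HasSum (fun k : ℕ => ‖x‖ ^ k / k) (-Real.log (1 - ‖x‖)) := by
    refine Complex.hasSum_ofReal.mp ?_
    push_cast
    rw [ofReal_log (by linarith)]
    push_cast
    exact hasSum_taylorSeries_neg_log (by simpa using hx)
  simpa only [norm_neg] using
    (hasSum_taylorSeries_neg_log hx).norm_le_of_bounded hreal fun k => by simp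

theorem min_mul_one_sub_le_one_sub_rpow {c t : ℝ} (hc : 0 < c) (ht0 : 0 ≤ t) (ht1 : t ≤ 1) :
    min c 1 * (1 - t) ≤ 1 - t ^ c := by
  rcases le_total 1 c with h | h
  · have : t ^ c ≤ t := by
      simpa using Real.rpow_le_rpow_of_exponent_ge' ht0 ht1 zero_le_one h
    rw [min_eq_right h]
    linarith
  · have hb := rpow_one_add_le_one_add_mul_self (s := t - 1) (by linarith) hc.le h
    rw [add_sub_cancel] at hb
    rw [min_eq_left h]
    linarith

theorem norm_tpow (z : ℂ) {t : ℝ} (ht : 0 < t) : ‖tpow z t‖ = t ^ z.re := by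
  rw [tpow, Complex.norm_exp, Real.rpow_def_of_pos ht, mul_comm]
  simp [Complex.mul_re]

theorem tpow_nat_mul (n : ℕ) (z : ℂ) (t : ℝ) : tpow (n * z) t = tpow z t ^ n := by
  rw [tpow, tpow, mul_assoc, Complex.exp_nat_mul]

theorem norm_mul_tpow_le {z w : ℂ} (hw : ‖w‖ ≤ 1) {t : ℝ} (ht : 0 < t) :
    ‖w * tpow z t‖ ≤ t ^ z.re := by
  rw [norm_mul, norm_tpow z ht]
  exact mul_le_of_le_one_left (Real.rpow_pos_of_pos ht _).le hw

theorem norm_log_one_sub_mul_tpow_le {z w : ℂ} (hz : 0 < z.re) (hw : ‖w‖ ≤ 1) {t : ℝ}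
    (ht : t ∈ Set.Ioo 0 1) :
    ‖log (1 - w * tpow z t)‖ ≤ -Real.log (min z.re 1) - Real.log (1 - t) := by
  have hmin : 0 < min z.re 1 := lt_min hz one_pos
  have htc : t ^ z.re < 1 := Real.rpow_lt_one ht.1.le ht.2 hz
  have hwt := norm_mul_tpow_le (z := z) hw ht.1
  calc ‖log (1 - w * tpow z t)‖ ≤ -Real.log (1 - ‖w * tpow z t‖) :=
        norm_log_one_sub_le (hwt.trans_lt htc)
    _ ≤ -Real.log (1 - t ^ z.re) := by
        gcongr
    _ ≤ -Real.log (min z.re 1 * (1 - t)) := by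
        gcongr
        · exact mul_pos hmin (by linarith [ht.2])
        · exact min_mul_one_sub_le_one_sub_rpow hz ht.1.le ht.2.le
    _ = -Real.log (min z.re 1) - Real.log (1 - t) := by
        rw [Real.log_mul hmin.ne' (by linarith [ht.2])]
        ring

theorem intervalIntegrable_log_one_sub_mul_tpow {z w : ℂ} (hz : 0 < z.re) (hw : ‖w‖ ≤ 1) :
    IntervalIntegrable (fun t => log (1 - w * tpow z t)) volume 0 1 := by
  have hbound : IntervalIntegrable (fun t => -Real.log (min z.re 1) - Real.log (1 - t))
      volume 0 1 := by
    refine intervalIntegrable_const.sub ?_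
    simpa using
      ((intervalIntegral.intervalIntegrable_log' (a := 0) (b := 1)).comp_sub_left 1).symm
  have hmeas : Measurable fun t => log (1 - w * tpow z t) :=
    Complex.measurable_log.comp (by unfold tpow; fun_prop)
  rw [intervalIntegrable_iff_integrableOn_Ioo_of_le zero_le_one] at hbound ⊢
  refine hbound.mono' hmeas.aestronglyMeasurable ?_
  exact ae_restrict_of_forall_mem measurableSet_Ioo fun t ht =>
    norm_log_one_sub_mul_tpow_le hz hw ht

theorem inv_sub_ofReal_ne_zero {v : ℂ} (hv0 : v ≠ 0) (hv1 : ‖v‖ ≤ 1) (hv2 : v ≠ 1) {t : ℝ}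
    (ht : t ∈ Set.Icc 0 1) : v⁻¹ - t ≠ 0 := by
  intro h
  rw [sub_eq_zero] at h
  have hnorm : 1 ≤ t := by
    have := (one_le_inv₀ (norm_pos_iff.mpr hv0)).mpr hv1
    rwa [← norm_inv, h, norm_real, Real.norm_of_nonneg ht.1] at this
  apply hv2
  rw [← inv_inv v, h, le_antisymm ht.2 hnorm, ofReal_one, inv_one]

theorem intervalIntegrable_F_integrand {z w v : ℂ} (hz : 0 < z.re) (hw : ‖w‖ ≤ 1) (hv0 : v ≠ 0)
    (hv1 : ‖v‖ ≤ 1) (hv2 : v ≠ 1) :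
    IntervalIntegrable (fun t : ℝ => log (1 - w * tpow z t) / (v⁻¹ - t)) volume 0 1 := by
  simp only [div_eq_mul_inv]
  refine (intervalIntegrable_log_one_sub_mul_tpow hz hw).mul_continuousOn ?_
  rw [Set.uIcc_of_le zero_le_one]
  exact (continuousOn_const.sub continuous_ofReal.continuousOn).inv₀ fun t ht =>
    inv_sub_ofReal_ne_zero hv0 hv1 hv2 ht

theorem statement0_general (n : ℕ) (hn : 1 ≤ n) (z u v : ℂ) (hz : 0 < z.re)
    (hun1 : ‖u ^ n‖ ≤ 1)
    (hv0 : v ≠ 0) (hv1 : ‖v‖ ≤ 1) (hv2 : v ≠ 1) :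
    F ((n : ℂ) * z) (u ^ n) v = ∑ α ∈ nthRootsFinset n (1 : ℂ), F z (u * α) v := by
  have hu : ‖u‖ ≤ 1 :=
    (pow_le_one_iff_of_nonneg (norm_nonneg u) (by omega)).mp (by rwa [← norm_pow] : ‖u‖ ^ n ≤ 1)
  have hint : ∀ α ∈ nthRootsFinset n (1 : ℂ), IntervalIntegrable
      (fun t : ℝ => log (1 - u * α * tpow z t) / (v⁻¹ - t)) volume 0 1 := fun α hα =>
    intervalIntegrable_F_integrand hz
      (by rwa [norm_mul, norm_eq_one_of_mem_nthRootsFinset hα, mul_one]) hv0 hv1 hv2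
  simp only [F]
  rw [← intervalIntegral.integral_finsetSum hint, intervalIntegral.integral_of_le zero_le_one,
    intervalIntegral.integral_of_le zero_le_one, integral_Ioc_eq_integral_Ioo,
    integral_Ioc_eq_integral_Ioo]
  refine setIntegral_congr_fun measurableSet_Ioo fun t ht => ?_
  have hut : ‖u * tpow z t‖ < 1 :=
    (norm_mul_tpow_le hu ht.1).trans_lt (Real.rpow_lt_one ht.1.le ht.2 hz)
  rw [← Finset.sum_div, tpow_nat_mul, ← mul_pow, ← sum_log_one_sub_mul_nthRoot (by omega) hut]
  congr 1
  exact Finset.sum_congr rfl fun α _ => by ring_nf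

theorem statement0 (n : ℕ) (hn : 1 ≤ n) (z u v : ℂ) (hz : 0 < z.re)
    (hun0 : u ^ n ≠ 0) (hun1 : ‖u ^ n‖ ≤ 1)
    (hv0 : v ≠ 0) (hv1 : ‖v‖ ≤ 1) (hv2 : v ≠ 1) :
    F ((n : ℂ) * z) (u ^ n) v = ∑ α ∈ nthRootsFinset n (1 : ℂ), F z (u * α) v :=
  statement0_general n hn z u v hz hun1 hv0 hv1 hv2
end

section
/- Let n ≥ 1 be a natural number and let v be a complex number with v^n ∈ 𝔻' such that for every n-th root of unity α the number αv/(αv−1) lies in the open unit disc. Then F(1/n; 1, v^n, 1) = −2·∑_{α^n=1} Li₃(αv/(αv−1)), where F(1/n; 1, v^n, 1) = ∫₀¹ log²(1 − t^{1/n})/(v^{−n} − t) dt. -/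
open Complex MeasureTheory Polynomial

/-- `F(z;u,v,w) = ∫₀¹ log(1 − u t^z) log(1 − w t^z)/(v⁻¹ − t) dt`. -/
noncomputable def F3 (z u v w : ℂ) : ℂ :=
  ∫ t in (0:ℝ)..1,
    Complex.log (1 - u * tpow z t) * Complex.log (1 - w * tpow z t) / (v⁻¹ - (t : ℂ))

/-- The polylogarithm `Li_s(z) = ∑_{n≥1} z^n / n^s`. -/
noncomputable def Li (s : ℕ) (z : ℂ) : ℂ := ∑' n : ℕ, z ^ (n + 1) / ((n : ℂ) + 1) ^ s

/-!
Substituting `t = (1 - u) ^ n` turns the integral into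
`∫₀¹ log² u · n (1 - u)^(n-1) / (v^(-n) - (1 - u)^n) du`. Writing `w = v (1 - u)`, the kernel is
`-v · n w^(n-1) / (1 - w^n)`, and the logarithmic derivative of `1 - w^n = ∏_α (1 - α w)` splits it
into `∑_α -z_α / (1 - z_α u)` with `z_α = α v / (α v - 1)`. Finally, expanding `1 / (1 - z u)` as a
geometric series and using `∫₀¹ u^k log² u du = 2 / (k + 1)^3` gives
`∫₀¹ log² u · z / (1 - z u) du = 2 Li₃ z` for `‖z‖ < 1`.
-/

open Set
open scoped Nat

lemma image_exp_neg_Ioi : (fun t : ℝ => Real.exp (-t)) '' Ioi 0 = Ioo 0 1 := by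
  ext y
  constructor
  · rintro ⟨t, ht, rfl⟩
    exact ⟨Real.exp_pos _, Real.exp_lt_one_iff.2 (neg_lt_zero.2 ht)⟩
  · rintro ⟨h0, h1⟩
    exact ⟨-Real.log y, by simpa using Real.log_neg h0 h1, by simp [Real.exp_log h0]⟩

lemma integral_Ioo_pow_mul_neg_log_pow (k m : ℕ) :
    ∫ x in Ioo (0:ℝ) 1, x ^ k * (-Real.log x) ^ m = m ! / ((k:ℝ) + 1) ^ (m + 1) := by
  rw [← image_exp_neg_Ioi, integral_image_eq_integral_deriv_smul_of_antitoneOn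
    (f := fun t => Real.exp (-t)) measurableSet_Ioi
    (fun t _ => ((Real.hasDerivAt_exp (-t)).comp t (hasDerivAt_neg t)).hasDerivWithinAt)
    (fun a _ b _ hab => Real.exp_le_exp.2 (neg_le_neg hab))]
  calc ∫ t in Ioi (0:ℝ),
        -(Real.exp (-t) * -1) • (Real.exp (-t) ^ k * (-Real.log (Real.exp (-t))) ^ m)
      = ∫ t in Ioi (0:ℝ), t ^ (((m + 1 : ℕ) : ℝ) - 1) * Real.exp (-((k + 1) * t)) := by
        refine setIntegral_congr_fun measurableSet_Ioi fun t _ => ?_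
        rw [Real.log_exp, neg_neg, ← Real.exp_nat_mul, Nat.cast_add_one, add_sub_cancel_right,
          Real.rpow_natCast, smul_eq_mul, show -((k + 1) * t) = -t + k * -t by ring, Real.exp_add]
        ring
    _ = m ! / ((k:ℝ) + 1) ^ (m + 1) := by
        rw [Real.integral_rpow_mul_exp_neg_mul_Ioi (by positivity) (by positivity),
          Real.rpow_natCast, Nat.cast_add_one m, Real.Gamma_nat_eq_factorial, div_pow, one_pow]
        ring

/-- Non-integrable functions have integral `0`, so a nonzero value forces integrability. -/
lemma integrableOn_Ioo_pow_mul_neg_log_pow (k m : ℕ) :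
    IntegrableOn (fun x : ℝ => x ^ k * (-Real.log x) ^ m) (Ioo 0 1) :=
  Integrable.of_integral_ne_zero <| by
    rw [integral_Ioo_pow_mul_neg_log_pow]; positivity

lemma IsPrimitiveRoot.sum_div_one_sub_mul {𝕜 : Type*} [NontriviallyNormedField 𝕜] {ζ : 𝕜}
    {n : ℕ} (hζ : IsPrimitiveRoot ζ n) (hn : 0 < n) {w : 𝕜} (hw : w ^ n ≠ 1) :
    ∑ α ∈ nthRootsFinset n (1:𝕜), α / (1 - α * w) = n * w ^ (n - 1) / (1 - w ^ n) := by
  have hprod : ∀ x : 𝕜, 1 - x ^ n = ∏ α ∈ nthRootsFinset n (1:𝕜), (1 - α * x) := fun x => by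
    simpa using hζ.pow_sub_pow_eq_prod_sub_mul 1 x hn
  have hne : ∀ α ∈ nthRootsFinset n (1:𝕜), 1 - α * w ≠ 0 := by
    rw [← Finset.prod_ne_zero_iff, ← hprod]
    exact sub_ne_zero.2 hw.symm
  have hlog := logDeriv_prod (f := fun α x => 1 - α * x) hne fun α _ => by fun_prop
  rw [← funext hprod] at hlog
  simpa [logDeriv_apply, neg_div, Finset.sum_neg_distrib] using hlog.symm

lemma integral_zero_one_eq_integral_one_sub_pow_smul {E : Type*} [NormedAddCommGroup E]
    [NormedSpace ℝ E] {n : ℕ} (hn : n ≠ 0) (g : ℝ → E) :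
    ∫ t in (0:ℝ)..1, g t = ∫ u in Ioo (0:ℝ) 1, ((n:ℝ) * (1 - u) ^ (n - 1)) • g ((1 - u) ^ n) := by
  have := integral_Icc_deriv_smul_of_deriv_nonpos (f := fun u : ℝ => (1 - u) ^ n)
    (f' := fun u => -((n:ℝ) * (1 - u) ^ (n - 1))) (g := g) (by fun_prop)
    (fun u _ => by
      simpa [Function.comp_def] using
        (hasDerivAt_pow n (1 - u)).comp u ((hasDerivAt_id u).const_sub 1))
    (fun u hu => by have := hu.2; simp only [neg_nonpos]; positivity) zero_le_one
  simp only [sub_self, zero_pow hn, sub_zero, one_pow, neg_smul, integral_neg, neg_inj] at this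
  rw [intervalIntegral.integral_of_le zero_le_one, ← integral_Icc_eq_integral_Ioc, ← this,
    integral_Icc_eq_integral_Ioo]

lemma one_sub_norm_le_norm_one_sub_mul_ofReal (z : ℂ) {u : ℝ} (hu : u ∈ Icc 0 1) :
    1 - ‖z‖ ≤ ‖1 - z * u‖ :=
  calc 1 - ‖z‖ ≤ 1 - ‖z * u‖ := by
        rw [norm_mul, norm_real, Real.norm_of_nonneg hu.1]
        nlinarith [norm_nonneg z, hu.2]
    _ ≤ ‖1 - z * u‖ := by simpa using norm_sub_norm_le (1:ℂ) (z * u)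

lemma neg_log_nonneg_of_mem_Ioo {u : ℝ} (hu : u ∈ Ioo 0 1) : 0 ≤ -Real.log u :=
  neg_nonneg.2 (Real.log_nonpos hu.1.le hu.2.le)

lemma integrableOn_neg_log_pow_mul_div {z : ℂ} (hz : ‖z‖ < 1) (m : ℕ) :
    IntegrableOn (fun u : ℝ => ((-Real.log u : ℝ) : ℂ) ^ m * (z / (1 - z * u))) (Ioo 0 1) := by
  have hbound : IntegrableOn (fun u : ℝ => (-Real.log u) ^ m * (‖z‖ / (1 - ‖z‖))) (Ioo 0 1) :=
    ((integrableOn_Ioo_pow_mul_neg_log_pow 0 m).congr_fun (fun u _ => by simp)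
      measurableSet_Ioo).mul_const _
  refine hbound.mono' (by fun_prop) ?_
  filter_upwards [ae_restrict_mem measurableSet_Ioo] with u hu
  rw [norm_mul, norm_pow, norm_real, Real.norm_of_nonneg (neg_log_nonneg_of_mem_Ioo hu), norm_div]
  gcongr
  · exact pow_nonneg (neg_log_nonneg_of_mem_Ioo hu) m
  · exact one_sub_norm_le_norm_one_sub_mul_ofReal z (Ioo_subset_Icc_self hu)

lemma integral_neg_log_pow_mul_div {z : ℂ} (hz : ‖z‖ < 1) (m : ℕ) :
    ∫ u in Ioo (0:ℝ) 1, ((-Real.log u : ℝ) : ℂ) ^ m * (z / (1 - z * u)) = m ! * Li (m + 1) z := by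
  set F : ℕ → ℝ → ℂ := fun k u => z ^ (k + 1) * ((u ^ k * (-Real.log u) ^ m : ℝ) : ℂ)
  have hint : ∀ k, IntegrableOn (F k) (Ioo 0 1) := fun k =>
    (integrableOn_Ioo_pow_mul_neg_log_pow k m).ofReal.const_mul _
  have hval : ∀ k, ∫ u in Ioo (0:ℝ) 1, F k u = m ! * (z ^ (k + 1) / ((k : ℂ) + 1) ^ (m + 1)) := by
    intro k
    rw [integral_const_mul, integral_complex_ofReal, integral_Ioo_pow_mul_neg_log_pow]
    push_cast
    ring
  have hnorm : ∀ k,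
      ∫ u in Ioo (0:ℝ) 1, ‖F k u‖ = ‖z‖ ^ (k + 1) * (m ! / ((k:ℝ) + 1) ^ (m + 1)) := by
    intro k
    rw [← integral_Ioo_pow_mul_neg_log_pow, ← integral_const_mul]
    refine setIntegral_congr_fun measurableSet_Ioo fun u hu => ?_
    rw [norm_mul, norm_pow, norm_real, Real.norm_of_nonneg
      (mul_nonneg (pow_nonneg hu.1.le k) (pow_nonneg (neg_log_nonneg_of_mem_Ioo hu) m))]
  have hsum : Summable fun k => ∫ u in Ioo (0:ℝ) 1, ‖F k u‖ := by
    refine .of_nonneg_of_le (fun k => integral_nonneg fun u => norm_nonneg _) (fun k => ?_)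
      (((summable_geometric_of_lt_one (norm_nonneg z) hz).mul_left (‖z‖ * m !)))
    rw [hnorm, pow_succ']
    calc ‖z‖ * ‖z‖ ^ k * (m ! / ((k:ℝ) + 1) ^ (m + 1)) ≤ ‖z‖ * ‖z‖ ^ k * m ! := by
          gcongr
          exact div_le_self (by positivity) (one_le_pow₀ (by simp))
      _ = ‖z‖ * m ! * ‖z‖ ^ k := by ring
  have hpt : ∀ u ∈ Ioo (0:ℝ) 1, ∑' k, F k u = ((-Real.log u : ℝ) : ℂ) ^ m * (z / (1 - z * u)) := by
    intro u hu
    have hzu : ‖z * u‖ < 1 := by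
      rw [norm_mul, norm_real, Real.norm_of_nonneg hu.1.le]
      nlinarith [norm_nonneg z, hu.2]
    have hterm : ∀ k, F k u = (z * ((-Real.log u : ℝ) : ℂ) ^ m) * (z * u) ^ k := fun k => by
      simp only [F]; push_cast; ring
    rw [tsum_congr hterm, tsum_mul_left, tsum_geometric_of_norm_lt_one hzu]
    ring
  calc ∫ u in Ioo (0:ℝ) 1, ((-Real.log u : ℝ) : ℂ) ^ m * (z / (1 - z * u))
      = ∫ u in Ioo (0:ℝ) 1, ∑' k, F k u := (setIntegral_congr_fun measurableSet_Ioo hpt).symm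
    _ = ∑' k, ∫ u in Ioo (0:ℝ) 1, F k u := (integral_tsum_of_summable_integral_norm hint hsum).symm
    _ = m ! * Li (m + 1) z := by rw [tsum_congr hval, tsum_mul_left, Li]

lemma tpow_inv_natCast_pow {n : ℕ} (hn : n ≠ 0) {s : ℝ} (hs : 0 < s) :
    tpow (n : ℂ)⁻¹ (s ^ n) = s := by
  rw [tpow, Real.log_pow, ofReal_mul, ofReal_natCast, inv_mul_cancel_left₀ (Nat.cast_ne_zero.2 hn),
    ← ofReal_exp, Real.exp_log hs]

lemma div_one_sub_div_sub_one_mul {a : ℂ} (ha : a ≠ 1) {u : ℂ} (h : a * (1 - u) ≠ 1) :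
    a / (a - 1) / (1 - a / (a - 1) * u) = -(a / (1 - a * (1 - u))) := by
  have ha' : a - 1 ≠ 0 := sub_ne_zero.2 ha
  have h' : 1 - a * (1 - u) ≠ 0 := sub_ne_zero.2 h.symm
  have h'' : a - 1 - a * u ≠ 0 := fun h0 => h' (by linear_combination -h0)
  field_simp
  ring

lemma mul_ne_one_of_mem_nthRootsFinset {R : Type*} [CommRing R] [IsDomain R] {n : ℕ} (hn : 0 < n)
    {α x : R} (hα : α ∈ nthRootsFinset n (1 : R)) (hx : x ^ n ≠ 1) : α * x ≠ 1 := fun h => hx <| by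
  simpa [mul_pow, (mem_nthRootsFinset hn 1).1 hα] using congrArg (· ^ n) h

lemma sum_nthRoots_div_one_sub_div_sub_one_mul {n : ℕ} (hn : 0 < n) {v : ℂ} (hv : v ≠ 0)
    (hvn : v ^ n ≠ 1) {u : ℂ} (hw : (v * (1 - u)) ^ n ≠ 1) :
    ∑ α ∈ nthRootsFinset n (1 : ℂ), α * v / (α * v - 1) / (1 - α * v / (α * v - 1) * u)
      = -(n * (1 - u) ^ (n - 1) / ((v ^ n)⁻¹ - (1 - u) ^ n)) := by
  obtain ⟨k, rfl⟩ : ∃ k, n = k + 1 := ⟨n - 1, by omega⟩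
  calc ∑ α ∈ nthRootsFinset (k + 1) (1 : ℂ), α * v / (α * v - 1) / (1 - α * v / (α * v - 1) * u)
      = -(v * ∑ α ∈ nthRootsFinset (k + 1) (1 : ℂ), α / (1 - α * (v * (1 - u)))) := by
        rw [Finset.mul_sum, ← Finset.sum_neg_distrib]
        refine Finset.sum_congr rfl fun α hα => ?_
        rw [div_one_sub_div_sub_one_mul (mul_ne_one_of_mem_nthRootsFinset hn hα hvn)
          (mul_assoc α v _ ▸ mul_ne_one_of_mem_nthRootsFinset hn hα hw)]
        ring
    _ = -(v * ((k + 1 : ℕ) * (v * (1 - u)) ^ k / (1 - (v * (1 - u)) ^ (k + 1)))) := by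
        rw [(isPrimitiveRoot_exp _ hn.ne').sum_div_one_sub_mul hn hw, Nat.add_sub_cancel]
    _ = -((k + 1 : ℕ) * (1 - u) ^ k / ((v ^ (k + 1))⁻¹ - (1 - u) ^ (k + 1))) := by
        have hw' : 1 - v ^ (k + 1) * (1 - u) ^ (k + 1) ≠ 0 :=
          sub_ne_zero.2 (mul_pow v _ _ ▸ hw).symm
        simp only [mul_pow]
        rw [show (v ^ (k + 1))⁻¹ - (1 - u) ^ (k + 1)
            = (1 - v ^ (k + 1) * (1 - u) ^ (k + 1)) / v ^ (k + 1) by field_simp]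
        field_simp
        ring

lemma norm_mul_ofReal_pow_lt_one {n : ℕ} (hn : n ≠ 0) {v : ℂ} (hv : ‖v ^ n‖ ≤ 1) {s : ℝ}
    (hs : s ∈ Ioo 0 1) : ‖(v * s) ^ n‖ < 1 := by
  rw [mul_pow, norm_mul, ← ofReal_pow, norm_real, Real.norm_of_nonneg (pow_nonneg hs.1.le n)]
  calc ‖v ^ n‖ * s ^ n ≤ s ^ n := mul_le_of_le_one_left (pow_nonneg hs.1.le n) hv
    _ < 1 := pow_lt_one₀ hs.1.le hs.2 hn

lemma smul_integrand_one_sub_pow_eq_neg_sum {n : ℕ} (hn : 0 < n) {v : ℂ} (hv : v ≠ 0)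
    (hvn1 : ‖v ^ n‖ ≤ 1) (hvn2 : v ^ n ≠ 1) {u : ℝ} (hu : u ∈ Ioo 0 1) :
    ((n:ℝ) * (1 - u) ^ (n - 1)) •
      (log (1 - 1 * tpow (n : ℂ)⁻¹ ((1 - u) ^ n)) * log (1 - 1 * tpow (n : ℂ)⁻¹ ((1 - u) ^ n))
        / ((v ^ n)⁻¹ - (((1 - u) ^ n : ℝ) : ℂ)))
      = -∑ α ∈ nthRootsFinset n (1 : ℂ), ((-Real.log u : ℝ) : ℂ) ^ 2 *
          (α * v / (α * v - 1) / (1 - α * v / (α * v - 1) * u)) := by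
  have hu' : 1 - u ∈ Ioo (0:ℝ) 1 := ⟨by linarith [hu.2], by linarith [hu.1]⟩
  have hw : (v * (1 - (u : ℂ))) ^ n ≠ 1 := fun h =>
    (norm_mul_ofReal_pow_lt_one hn.ne' hvn1 hu').ne (by push_cast; rw [h, norm_one])
  rw [tpow_inv_natCast_pow hn.ne' (sub_pos.2 hu.2), ← Finset.mul_sum,
    sum_nthRoots_div_one_sub_div_sub_one_mul hn hv hvn2 hw,
    show (1:ℂ) - 1 * ((1 - u : ℝ) : ℂ) = (u : ℂ) by push_cast; ring, ← ofReal_log hu.1.le,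
    real_smul]
  push_cast
  ring

theorem statement7 (n : ℕ) (hn : 1 ≤ n) (v : ℂ)
    (hvn0 : v ^ n ≠ 0) (hvn1 : ‖v ^ n‖ ≤ 1) (hvn2 : v ^ n ≠ 1)
    (hdisc : ∀ α ∈ nthRootsFinset n (1 : ℂ), ‖α * v / (α * v - 1)‖ < 1) :
    F3 ((n : ℂ))⁻¹ 1 (v ^ n) 1 =
      -2 * ∑ α ∈ nthRootsFinset n (1 : ℂ), Li 3 (α * v / (α * v - 1)) := by
  have hv : v ≠ 0 := by rintro rfl; simp [Nat.one_le_iff_ne_zero.1 hn] at hvn0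
  rw [F3, integral_zero_one_eq_integral_one_sub_pow_smul (Nat.one_le_iff_ne_zero.1 hn),
    setIntegral_congr_fun measurableSet_Ioo
      fun u hu => smul_integrand_one_sub_pow_eq_neg_sum hn hv hvn1 hvn2 hu,
    integral_neg, integral_finsetSum _ fun α hα => integrableOn_neg_log_pow_mul_div (hdisc α hα) 2,
    Finset.sum_congr rfl fun α hα => integral_neg_log_pow_mul_div (hdisc α hα) 2]
  simp [Finset.mul_sum]
end

section
/- For every natural number k ≥ 1, one has ∫₀¹ log^k(1 − t)/(−1 − t) dt = (−1)^{k+1} · k! · Li_{k+1}(1/2); that is, F_k(1; 1, −1) = (−1)^{k+1} · k! · Li_{k+1}(1/2). In particular, for k = 2 this gives ∫₀¹ log²(1 − t)/(−1 − t) dt = −2·Li₃(1/2). -/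
/-!
Substituting `t = 1 - exp (-x)` turns the integral into
`(-1) ^ (k + 1) * ∫ x in Ioi 0, x ^ k * (exp (-x) / (2 - exp (-x)))`. Expanding
`exp (-x) / (2 - exp (-x)) = ∑ 2 ^ (-(n + 1)) * exp (-(n + 1) * x)` and integrating termwise
against `x ^ k` (a Mellin transform, each term contributing `k ! / (n + 1) ^ (k + 1)`)
gives `k ! * Li_{k+1}(1/2)`.
-/

open MeasureTheory

/-- The real polylogarithm `Li_s(x) = ∑_{n≥1} x^n / n^s`. -/
noncomputable def LiR (s : ℕ) (x : ℝ) : ℝ := ∑' n : ℕ, x ^ (n + 1) / ((n : ℝ) + 1) ^ s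

open Real Set
open scoped Nat

theorem image_one_sub_exp_neg_Ioi : (fun x : ℝ ↦ 1 - exp (-x)) '' Ioi 0 = Ioo 0 1 := by
  ext t
  constructor
  · rintro ⟨x, hx, rfl⟩
    have : exp (-x) < 1 := by simpa using hx
    exact ⟨by linarith, by linarith [exp_pos (-x)]⟩
  · rintro ⟨ht0, ht1⟩
    refine ⟨-log (1 - t), ?_, ?_⟩
    · simpa using log_neg (by linarith) (by linarith)
    · simp [exp_log (by linarith : 0 < 1 - t)]

theorem integral_comp_one_sub_exp_neg {E : Type*} [NormedAddCommGroup E] [NormedSpace ℝ E]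
    (g : ℝ → E) : ∫ t in (0:ℝ)..1, g t = ∫ x in Ioi 0, exp (-x) • g (1 - exp (-x)) := by
  have hderiv (x : ℝ) : HasDerivAt (fun x ↦ 1 - exp (-x)) (exp (-x)) x := by
    simpa using ((hasDerivAt_neg x).exp).const_sub 1
  rw [intervalIntegral.integral_of_le zero_le_one, integral_Ioc_eq_integral_Ioo,
    ← image_one_sub_exp_neg_Ioi, integral_image_eq_integral_abs_deriv_smul measurableSet_Ioi
      (fun x _ ↦ (hderiv x).hasDerivWithinAt)]
  · simp only [abs_of_pos (exp_pos _)]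
  · intro x _ y _ hxy
    simpa using hxy

theorem hasSum_pow_mul_exp_neg {z x : ℝ} (hz : |z| < 1) (hx : 0 ≤ x) :
    HasSum (fun n : ℕ ↦ z ^ (n + 1) * exp (-(n + 1) * x))
      (z * exp (-x) / (1 - z * exp (-x))) := by
  have hr : |z * exp (-x)| < 1 := by
    rw [abs_mul, abs_of_pos (exp_pos _)]
    calc |z| * exp (-x) ≤ |z| * 1 := by gcongr; simpa using hx
      _ < 1 := by simpa using hz
  have hterm : (fun n : ℕ ↦ z ^ (n + 1) * exp (-(n + 1) * x)) =
      fun n ↦ z * exp (-x) * (z * exp (-x)) ^ n := by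
    funext n
    rw [← pow_succ', mul_pow, ← exp_nat_mul]
    push_cast
    ring_nf
  rw [hterm, div_eq_mul_inv]
  exact (hasSum_geometric_of_abs_lt_one hr).mul_left _

theorem factorial_mul_LiR_eq_integral (k : ℕ) {z : ℝ} (hz : |z| < 1) :
    k ! * LiR (k + 1) z = ∫ x in Ioi 0, x ^ k * (z * exp (-x) / (1 - z * exp (-x))) := by
  have hmellin := hasSum_mellin (a := fun n : ℕ ↦ ((z ^ (n + 1) : ℝ) : ℂ))
    (p := fun n ↦ n + 1) (F := fun x ↦ ((z * exp (-x) / (1 - z * exp (-x)) : ℝ) : ℂ))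
    (s := k + 1) (fun n ↦ Or.inr (by positivity))
    (by simp only [Complex.add_re, Complex.natCast_re, Complex.one_re]; positivity)
    (fun x hx ↦ by exact_mod_cast Complex.hasSum_ofReal.mpr (hasSum_pow_mul_exp_neg hz hx.le)) ?_
  · rw [LiR, ← tsum_mul_left]
    refine HasSum.tsum_eq ?_
    rw [← Complex.hasSum_ofReal]
    convert hmellin using 1
    · funext n
      have hs : (k : ℂ) + 1 = ((k + 1 : ℕ) : ℂ) := by push_cast; ring
      rw [Complex.Gamma_nat_eq_factorial, hs, Complex.cpow_natCast]
      push_cast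
      ring
    · rw [mellin, ← integral_complex_ofReal]
      refine setIntegral_congr_fun measurableSet_Ioi fun x _ ↦ ?_
      simp [← Complex.cpow_natCast]
  · simp only [Complex.add_re, Complex.natCast_re, Complex.one_re]
    refine Summable.of_nonneg_of_le (fun n ↦ by positivity) (fun n ↦ ?_)
      (summable_geometric_of_abs_lt_one hz).norm
    calc ‖((z ^ (n + 1) : ℝ) : ℂ)‖ / ((n : ℝ) + 1) ^ ((k : ℝ) + 1)
        ≤ ‖((z ^ (n + 1) : ℝ) : ℂ)‖ :=
          div_le_self (norm_nonneg _) (one_le_rpow (by linarith [n.cast_nonneg (α := ℝ)])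
            (by positivity))
      _ ≤ ‖z ^ n‖ := by
          rw [Complex.norm_real, norm_pow, norm_pow]
          exact pow_le_pow_of_le_one (norm_nonneg _) hz.le n.le_succ

theorem integral_log_one_sub_pow_div_neg_one_sub (k : ℕ) :
    ∫ t in (0:ℝ)..1, log (1 - t) ^ k / (-1 - t) =
      (-1) ^ (k + 1) * k ! * LiR (k + 1) (1 / 2) := by
  rw [integral_comp_one_sub_exp_neg, mul_assoc,
    factorial_mul_LiR_eq_integral k (by norm_num), ← integral_const_mul]
  refine setIntegral_congr_fun measurableSet_Ioi fun x hx ↦ ?_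
  have hexp : exp (-x) < 1 := by simpa using hx
  have hden : (2:ℝ) - exp (-x) ≠ 0 := by linarith
  simp only [sub_sub_cancel, log_exp, smul_eq_mul]
  rw [show -1 - (1 - exp (-x)) = -(2 - exp (-x)) by ring,
    show 1 - 1 / 2 * exp (-x) = (2 - exp (-x)) / 2 by ring, neg_pow]
  field_simp
  ring

theorem statement18 :
    (∀ k : ℕ, 1 ≤ k →
      (∫ t in (0:ℝ)..1, (Real.log (1 - t)) ^ k / (-1 - t)) =
        (-1 : ℝ) ^ (k + 1) * (k.factorial : ℝ) * LiR (k + 1) (1 / 2)) ∧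
    (∫ t in (0:ℝ)..1, (Real.log (1 - t)) ^ 2 / (-1 - t)) = -2 * LiR 3 (1 / 2) := by
  refine ⟨fun k _ ↦ integral_log_one_sub_pow_div_neg_one_sub k, ?_⟩
  rw [integral_log_one_sub_pow_div_neg_one_sub]
  norm_num
end
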